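/- Let a, b, a', b' be four distinct isotropic rays in ℝ^{2,n+1} with all six pairwise scalar products negative. Parametrize the spacelike geodesics ℓ(t) = (e^t a + e^{-t} b)/√(-2⟨a,b⟩) and ℓ'(s) = (e^s a' + e^{-s} b')/√(-2⟨a',b'⟩). Then the function (t,s) ↦ -⟨ℓ(t), ℓ'(s)⟩ is proper, positive, has a unique critical point, and its global minimum equals m = √(⟨a,a'⟩⟨b,b'⟩/(⟨a,b⟩⟨a',b'⟩)) + √(⟨a,b'⟩⟨b,a'⟩/(⟨a,b⟩⟨a',b'⟩)). -/

import Mathlib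

/-- The signature `(2, n+1)` bilinear form on `ℝ^{n+3}`. -/
noncomputable def bform (n : ℕ) (x y : Fin (n + 3) → ℝ) : ℝ :=
  ∑ i : Fin (n + 3), (if (i : ℕ) < 2 then (1 : ℝ) else -1) * (x i * y i)

/-- The unit speed spacelike geodesic `ℓ(t) = (e^t a + e^{-t} b)/√(-2⟨a,b⟩)` of `Ĥ^{2,n}`
determined by two isotropic rays `a`, `b` with `⟨a,b⟩ < 0`. -/
noncomputable def lgeo (n : ℕ) (a b : Fin (n + 3) → ℝ) (t : ℝ) : Fin (n + 3) → ℝ :=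
  (Real.sqrt (-2 * bform n a b))⁻¹ • (Real.exp t • a + Real.exp (-t) • b)


/-!
Expanding bilinearly, `-⟨ℓ(t), ℓ'(s)⟩` is a positive combination of `e^{±(t+s)}` and
`e^{±(t-s)}`, and `P e^u + Q e^{-u} = 2√(PQ) cosh (u - ½ log (Q/P))` for `P, Q > 0`. Hence in the
coordinates `t ± s` the function is `α cosh (t + s - u₀) + β cosh (t - s - v₀)` with `α + β = m`:
its only critical point is where both arguments vanish, its minimum is `α + β`, and it grows at
least linearly at infinity because `cosh x ≥ |x|`.
-/

open Real Filter

lemma abs_le_cosh (x : ℝ) : |x| ≤ cosh x := by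
  rw [← cosh_abs]
  exact (self_le_sinh_iff.mpr (abs_nonneg x)).trans (sinh_lt_cosh (x := |x|)).le

lemma mul_exp_add_mul_exp_neg {P Q : ℝ} (hP : 0 < P) (hQ : 0 < Q) (u : ℝ) :
    P * exp u + Q * exp (-u) = 2 * √(P * Q) * cosh (u - log (Q / P) / 2) := by
  have hr : exp (log (Q / P) / 2) = √(Q / P) := by
    rw [exp_half, exp_log (div_pos hQ hP)]
  have hsq : √(Q / P) ^ 2 = Q / P := sq_sqrt (div_pos hQ hP).le
  have hPQ : √(P * Q) = P * √(Q / P) := by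
    rw [show P * Q = P ^ 2 * (Q / P) by field_simp, sqrt_mul (sq_nonneg P), sqrt_sq hP.le]
  have hpos : 0 < √(Q / P) := sqrt_pos.mpr (div_pos hQ hP)
  rw [cosh_eq, exp_sub, exp_neg, exp_neg, exp_sub, hr, hPQ]
  field_simp
  rw [hsq]
  field_simp

lemma norm_le_abs_add_add_abs_sub (p : ℝ × ℝ) : ‖p‖ ≤ |p.1 + p.2| + |p.1 - p.2| := by
  rw [Prod.norm_def, Real.norm_eq_abs, Real.norm_eq_abs]
  refine max_le (abs_le.mpr ⟨?_, ?_⟩) (abs_le.mpr ⟨?_, ?_⟩) <;>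
    linarith [le_abs_self (p.1 + p.2), neg_abs_le (p.1 + p.2), le_abs_self (p.1 - p.2),
      neg_abs_le (p.1 - p.2)]

noncomputable def diagCoshSum (α β u₀ v₀ : ℝ) (p : ℝ × ℝ) : ℝ :=
  α * cosh (p.1 + p.2 - u₀) + β * cosh (p.1 - p.2 - v₀)

namespace diagCoshSum

variable {α β u₀ v₀ : ℝ}

noncomputable def center (u₀ v₀ : ℝ) : ℝ × ℝ := ((u₀ + v₀) / 2, (u₀ - v₀) / 2)

lemma center_fst_add_snd_sub : (center u₀ v₀).1 + (center u₀ v₀).2 - u₀ = 0 := by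
  simp only [center]
  ring

lemma center_fst_sub_snd_sub : (center u₀ v₀).1 - (center u₀ v₀).2 - v₀ = 0 := by
  simp only [center]
  ring

lemma apply_center : diagCoshSum α β u₀ v₀ (center u₀ v₀) = α + β := by
  simp only [diagCoshSum, center_fst_add_snd_sub, center_fst_sub_snd_sub, cosh_zero, mul_one]

lemma isLeast_range (hα : 0 ≤ α) (hβ : 0 ≤ β) :
    IsLeast (Set.range (diagCoshSum α β u₀ v₀)) (α + β) := by
  refine ⟨⟨center u₀ v₀, apply_center⟩, ?_⟩
  rintro _ ⟨p, rfl⟩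
  have h₁ := mul_le_mul_of_nonneg_left (one_le_cosh (p.1 + p.2 - u₀)) hα
  have h₂ := mul_le_mul_of_nonneg_left (one_le_cosh (p.1 - p.2 - v₀)) hβ
  simp only [diagCoshSum]
  linarith

lemma hasFDerivAt (p : ℝ × ℝ) :
    HasFDerivAt (diagCoshSum α β u₀ v₀)
      ((α * sinh (p.1 + p.2 - u₀)) • (ContinuousLinearMap.fst ℝ ℝ ℝ + ContinuousLinearMap.snd ℝ ℝ ℝ)
        + (β * sinh (p.1 - p.2 - v₀)) •
          (ContinuousLinearMap.fst ℝ ℝ ℝ - ContinuousLinearMap.snd ℝ ℝ ℝ)) p := by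
  have hu : HasFDerivAt (fun q : ℝ × ℝ => q.1 + q.2 - u₀)
      (ContinuousLinearMap.fst ℝ ℝ ℝ + ContinuousLinearMap.snd ℝ ℝ ℝ) p :=
    (hasFDerivAt_fst.add hasFDerivAt_snd).sub_const u₀
  have hv : HasFDerivAt (fun q : ℝ × ℝ => q.1 - q.2 - v₀)
      (ContinuousLinearMap.fst ℝ ℝ ℝ - ContinuousLinearMap.snd ℝ ℝ ℝ) p :=
    (hasFDerivAt_fst.sub hasFDerivAt_snd).sub_const v₀
  have h := (hu.cosh.const_mul α).add (hv.cosh.const_mul β)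
  simp only [smul_smul] at h
  exact h

lemma fderiv_eq_zero_iff (hα : α ≠ 0) (hβ : β ≠ 0) (p : ℝ × ℝ) :
    fderiv ℝ (diagCoshSum α β u₀ v₀) p = 0 ↔ p = center u₀ v₀ := by
  rw [(hasFDerivAt p).fderiv]
  constructor
  · intro h
    have h₁ : α * sinh (p.1 + p.2 - u₀) + β * sinh (p.1 - p.2 - v₀) = 0 := by
      simpa using DFunLike.congr_fun h (1, 0)
    have h₂ : α * sinh (p.1 + p.2 - u₀) - β * sinh (p.1 - p.2 - v₀) = 0 := by
      simpa [sub_eq_add_neg] using DFunLike.congr_fun h (0, 1)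
    have hu : p.1 + p.2 - u₀ = 0 := by
      rw [← sinh_eq_zero]
      exact (mul_eq_zero.mp (by linarith)).resolve_left hα
    have hv : p.1 - p.2 - v₀ = 0 := by
      rw [← sinh_eq_zero]
      exact (mul_eq_zero.mp (by linarith)).resolve_left hβ
    ext <;> simp only [center] <;> linarith
  · rintro rfl
    simp only [center_fst_add_snd_sub, center_fst_sub_snd_sub, sinh_zero, mul_zero, zero_smul,
      add_zero]

lemma tendsto_cocompact (hα : 0 < α) (hβ : 0 < β) :
    Tendsto (diagCoshSum α β u₀ v₀) (cocompact (ℝ × ℝ)) atTop := by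
  have hlin : Tendsto (fun p : ℝ × ℝ => min α β * (‖p‖ + -(|u₀| + |v₀|))) (cocompact (ℝ × ℝ))
      atTop :=
    (tendsto_atTop_add_const_right _ _ tendsto_norm_cocompact_atTop).const_mul_atTop
      (lt_min hα hβ)
  refine tendsto_atTop_mono (fun p => ?_) hlin
  set x := p.1 + p.2 - u₀
  set y := p.1 - p.2 - v₀
  have hx : |p.1 + p.2| - |u₀| ≤ |x| := abs_sub_abs_le_abs_sub _ _
  have hy : |p.1 - p.2| - |v₀| ≤ |y| := abs_sub_abs_le_abs_sub _ _
  calc min α β * (‖p‖ + -(|u₀| + |v₀|))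
      ≤ min α β * (|x| + |y|) :=
        mul_le_mul_of_nonneg_left (by linarith [norm_le_abs_add_add_abs_sub p])
          (le_min hα.le hβ.le)
    _ ≤ α * |x| + β * |y| := by
        rw [mul_add]
        gcongr
        exacts [min_le_left α β, min_le_right α β]
    _ ≤ α * cosh x + β * cosh y := by
        gcongr <;> exact abs_le_cosh _

end diagCoshSum

lemma bform_smul_add_smul (n : ℕ) (c d e f : ℝ) (x y z w : Fin (n + 3) → ℝ) :
    bform n (c • x + d • y) (e • z + f • w) =
      c * e * bform n x z + c * f * bform n x w + d * e * bform n y z + d * f * bform n y w := by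
  simp only [bform, Pi.add_apply, Pi.smul_apply, smul_eq_mul, Finset.mul_sum,
    ← Finset.sum_add_distrib]
  exact Finset.sum_congr rfl fun i _ => by ring

lemma sqrt_neg_two_mul_mul_sqrt_neg_two_mul {x y : ℝ} (hx : x < 0) :
    √(-2 * x) * √(-2 * y) = 2 * √(x * y) := by
  rw [← sqrt_mul (by linarith), show -2 * x * (-2 * y) = 2 ^ 2 * (x * y) by ring,
    sqrt_mul (sq_nonneg 2), sqrt_sq zero_le_two]

lemma neg_bform_lgeo_lgeo (n : ℕ) (a b a' b' : Fin (n + 3) → ℝ) (t s : ℝ) :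
    -bform n (lgeo n a b t) (lgeo n a' b' s) =
      (√(-2 * bform n a b) * √(-2 * bform n a' b'))⁻¹ *
        ((-bform n a a' * exp (t + s) + -bform n b b' * exp (-(t + s))) +
          (-bform n a b' * exp (t - s) + -bform n b a' * exp (-(t - s)))) := by
  simp only [lgeo, smul_add, smul_smul, bform_smul_add_smul, neg_sub, exp_add, exp_sub, exp_neg,
    mul_inv]
  ring

lemma neg_bform_lgeo_lgeo_eq_diagCoshSum {n : ℕ} {a b a' b' : Fin (n + 3) → ℝ}
    (hab : bform n a b < 0) (hab' : bform n a' b' < 0)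
    (haa' : bform n a a' < 0) (habp : bform n a b' < 0)
    (hba' : bform n b a' < 0) (hbb' : bform n b b' < 0) (p : ℝ × ℝ) :
    -bform n (lgeo n a b p.1) (lgeo n a' b' p.2) =
      diagCoshSum (√((bform n a a' * bform n b b') / (bform n a b * bform n a' b')))
        (√((bform n a b' * bform n b a') / (bform n a b * bform n a' b')))
        (log (bform n b b' / bform n a a') / 2) (log (bform n b a' / bform n a b') / 2) p := by
  have hprod : 0 < bform n a b * bform n a' b' := mul_pos_of_neg_of_neg hab hab'
  rw [neg_bform_lgeo_lgeo, sqrt_neg_two_mul_mul_sqrt_neg_two_mul hab,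
    mul_exp_add_mul_exp_neg (neg_pos.mpr haa') (neg_pos.mpr hbb'),
    mul_exp_add_mul_exp_neg (neg_pos.mpr habp) (neg_pos.mpr hba'),
    neg_div_neg_eq, neg_div_neg_eq, neg_mul_neg, neg_mul_neg,
    sqrt_div' _ hprod.le, sqrt_div' _ hprod.le, diagCoshSum]
  have := sqrt_pos.mpr hprod
  field_simp

theorem stmt14_general (n : ℕ) (a b a' b' : Fin (n + 3) → ℝ)
    (hab : bform n a b < 0) (hab' : bform n a' b' < 0)
    (haa' : bform n a a' < 0) (habp : bform n a b' < 0)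
    (hba' : bform n b a' < 0) (hbb' : bform n b b' < 0) :
    Filter.Tendsto (fun p : ℝ × ℝ => -(bform n (lgeo n a b p.1) (lgeo n a' b' p.2)))
      (Filter.cocompact (ℝ × ℝ)) Filter.atTop ∧
    (∀ p : ℝ × ℝ, 0 < -(bform n (lgeo n a b p.1) (lgeo n a' b' p.2))) ∧
    (∃! p : ℝ × ℝ,
      fderiv ℝ (fun q : ℝ × ℝ => -(bform n (lgeo n a b q.1) (lgeo n a' b' q.2))) p = 0) ∧
    IsLeast (Set.range (fun p : ℝ × ℝ => -(bform n (lgeo n a b p.1) (lgeo n a' b' p.2))))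
      (Real.sqrt ((bform n a a' * bform n b b') / (bform n a b * bform n a' b')) +
        Real.sqrt ((bform n a b' * bform n b a') / (bform n a b * bform n a' b'))) := by
  simp only [neg_bform_lgeo_lgeo_eq_diagCoshSum hab hab' haa' habp hba' hbb']
  set u₀ := log (bform n b b' / bform n a a') / 2
  set v₀ := log (bform n b a' / bform n a b') / 2
  have hprod : 0 < bform n a b * bform n a' b' := mul_pos_of_neg_of_neg hab hab'
  have hα := sqrt_pos.mpr (div_pos (mul_pos_of_neg_of_neg haa' hbb') hprod)
  have hβ := sqrt_pos.mpr (div_pos (mul_pos_of_neg_of_neg habp hba') hprod)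
  have hmin := diagCoshSum.isLeast_range (u₀ := u₀) (v₀ := v₀) hα.le hβ.le
  have hcrit := diagCoshSum.fderiv_eq_zero_iff (u₀ := u₀) (v₀ := v₀) hα.ne' hβ.ne'
  exact ⟨diagCoshSum.tendsto_cocompact hα hβ, fun p => (add_pos hα hβ).trans_le (hmin.2 ⟨p, rfl⟩),
    ⟨diagCoshSum.center u₀ v₀, (hcrit _).mpr rfl, fun p => (hcrit p).mp⟩, hmin⟩

/-- Let `a, b, a', b'` be four distinct isotropic rays with all pairwise scalar products
negative, and let `ℓ(t), ℓ'(s)` be the corresponding spacelike geodesics.  The function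
`f(t,s) = -⟨ℓ(t), ℓ'(s)⟩` is proper, positive, has a unique critical point, and its global
minimum equals
`m = √(⟨a,a'⟩⟨b,b'⟩/(⟨a,b⟩⟨a',b'⟩)) + √(⟨a,b'⟩⟨b,a'⟩/(⟨a,b⟩⟨a',b'⟩))`. -/
theorem stmt14 (n : ℕ) (a b a' b' : Fin (n + 3) → ℝ)
    (ha : bform n a a = 0) (hb : bform n b b = 0)
    (ha' : bform n a' a' = 0) (hb' : bform n b' b' = 0)
    (hab : bform n a b < 0) (hab' : bform n a' b' < 0)
    (haa' : bform n a a' < 0) (habp : bform n a b' < 0)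
    (hba' : bform n b a' < 0) (hbb' : bform n b b' < 0) :
    Filter.Tendsto (fun p : ℝ × ℝ => -(bform n (lgeo n a b p.1) (lgeo n a' b' p.2)))
      (Filter.cocompact (ℝ × ℝ)) Filter.atTop ∧
    (∀ p : ℝ × ℝ, 0 < -(bform n (lgeo n a b p.1) (lgeo n a' b' p.2))) ∧
    (∃! p : ℝ × ℝ,
      fderiv ℝ (fun q : ℝ × ℝ => -(bform n (lgeo n a b q.1) (lgeo n a' b' q.2))) p = 0) ∧
    IsLeast (Set.range (fun p : ℝ × ℝ => -(bform n (lgeo n a b p.1) (lgeo n a' b' p.2))))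
      (Real.sqrt ((bform n a a' * bform n b b') / (bform n a b * bform n a' b')) +
        Real.sqrt ((bform n a b' * bform n b a') / (bform n a b * bform n a' b'))) :=
  stmt14_general n a b a' b' hab hab' haa' habp hba' hbb'
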